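/- arXiv:1407.3230 — 5 statements merged into one kernel-verified Lean document; each statement's English description precedes it below -/
import Mathlib

section
/- For every set system F ⊆ 2^[n], the number of subsets of [n] strongly shattered by F is at most |F|, i.e. |st(F)| ≤ |F|. -/
/-!
Induct on the family by splitting off a ground element `a`: write `𝓕₁`, `𝓕₀` for the members
containing `a` (with `a` removed) and those avoiding it, so `|𝓕| = |𝓕₁| + |𝓕₀|`. A set avoiding `a`
that `𝓕` strongly shatters is strongly shattered by `𝓕₁` or by `𝓕₀`, according as the translate `I`
contains `a` or not; a set `S ∋ a` that `𝓕` strongly shatters gives `S \ {a}` strongly shattered by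
both. Hence `|st 𝓕| ≤ |st 𝓕₁ ∩ st 𝓕₀| + |st 𝓕₁ ∪ st 𝓕₀| = |st 𝓕₁| + |st 𝓕₀|`.
-/

open scoped symmDiff

/-- `𝓕` shatters `S`: every subset of `S` is the trace of some member of `𝓕` on `S`. -/
def Shatters {n : ℕ} (𝓕 : Finset (Finset (Fin n))) (S : Finset (Fin n)) : Prop :=
  ∀ T ⊆ S, ∃ F ∈ 𝓕, F ∩ S = T

/-- `𝓕` strongly shatters `S`: there is `I ⊆ [n] \ S` with `{H ∪ I : H ⊆ S} ⊆ 𝓕`. -/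
def StronglyShatters {n : ℕ} (𝓕 : Finset (Finset (Fin n))) (S : Finset (Fin n)) : Prop :=
  ∃ I : Finset (Fin n), I ⊆ Sᶜ ∧ ∀ H ⊆ S, H ∪ I ∈ 𝓕

open Classical in
/-- The family of subsets of `[n]` shattered by `𝓕`. -/
noncomputable def Sh {n : ℕ} (𝓕 : Finset (Finset (Fin n))) : Finset (Finset (Fin n)) :=
  Finset.univ.filter (Shatters 𝓕)

open Classical in
/-- The family of subsets of `[n]` strongly shattered by `𝓕`. -/
noncomputable def st {n : ℕ} (𝓕 : Finset (Finset (Fin n))) : Finset (Finset (Fin n)) :=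
  Finset.univ.filter (StronglyShatters 𝓕)

/-- `𝓕` is shattering-extremal if it shatters exactly `|𝓕|` sets. -/
def Extremal {n : ℕ} (𝓕 : Finset (Finset (Fin n))) : Prop :=
  (Sh 𝓕).card = 𝓕.card

/-- The Vapnik–Chervonenkis dimension: the maximum cardinality of a shattered set. -/
noncomputable def dimVC {n : ℕ} (𝓕 : Finset (Finset (Fin n))) : ℕ :=
  (Sh 𝓕).sup Finset.card

open Finset

variable {n : ℕ} {𝓕 : Finset (Finset (Fin n))} {S : Finset (Fin n)} {a : Fin n}

lemma mem_st : S ∈ st 𝓕 ↔ StronglyShatters 𝓕 S := by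
  classical simp [st]

namespace StronglyShatters

lemma exists_superset (h : StronglyShatters 𝓕 S) : ∃ A ∈ 𝓕, S ⊆ A :=
  let ⟨I, _, hI⟩ := h
  ⟨S ∪ I, hI S Subset.rfl, subset_union_left⟩

lemma memberSubfamily_or_nonMemberSubfamily (h : StronglyShatters 𝓕 S) (ha : a ∉ S) :
    StronglyShatters (𝓕.memberSubfamily a) S ∨ StronglyShatters (𝓕.nonMemberSubfamily a) S := by
  obtain ⟨I, hIS, hI⟩ := h
  have haH {H : Finset (Fin n)} (hH : H ⊆ S) : a ∉ H := fun h ↦ ha (hH h)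
  by_cases haI : a ∈ I
  · refine .inl ⟨I.erase a, (erase_subset a I).trans hIS, fun H hH ↦ ?_⟩
    rw [mem_memberSubfamily, ← union_insert, insert_erase haI]
    exact ⟨hI H hH, by simp [haH hH]⟩
  · exact .inr ⟨I, hIS, fun H hH ↦ mem_nonMemberSubfamily.2 ⟨hI H hH, by simp [haH hH, haI]⟩⟩

lemma memberSubfamily_erase (h : StronglyShatters 𝓕 S) (ha : a ∈ S) :
    StronglyShatters (𝓕.memberSubfamily a) (S.erase a) := by
  obtain ⟨I, hIS, hI⟩ := h
  have haI : a ∉ I := fun h ↦ mem_compl.1 (hIS h) ha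
  refine ⟨I, hIS.trans (compl_subset_compl.2 (erase_subset a S)), fun H hH ↦ ?_⟩
  have haH : a ∉ H := fun h ↦ (mem_erase.1 (hH h)).1 rfl
  rw [mem_memberSubfamily, ← insert_union]
  exact ⟨hI _ (insert_subset ha (hH.trans (erase_subset a S))), by simp [haH, haI]⟩

lemma nonMemberSubfamily_erase (h : StronglyShatters 𝓕 S) (ha : a ∈ S) :
    StronglyShatters (𝓕.nonMemberSubfamily a) (S.erase a) := by
  obtain ⟨I, hIS, hI⟩ := h
  have haI : a ∉ I := fun h ↦ mem_compl.1 (hIS h) ha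
  refine ⟨I, hIS.trans (compl_subset_compl.2 (erase_subset a S)), fun H hH ↦ ?_⟩
  have haH : a ∉ H := fun h ↦ (mem_erase.1 (hH h)).1 rfl
  exact mem_nonMemberSubfamily.2 ⟨hI H (hH.trans (erase_subset a S)), by simp [haH, haI]⟩

end StronglyShatters

lemma st_subset_biUnion_powerset : st 𝓕 ⊆ 𝓕.biUnion powerset := fun S hS ↦ by
  obtain ⟨A, hA, hSA⟩ := (mem_st.1 hS).exists_superset
  exact mem_biUnion.2 ⟨A, hA, mem_powerset.2 hSA⟩

lemma nonMemberSubfamily_st_subset :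
    (st 𝓕).nonMemberSubfamily a ⊆ st (𝓕.memberSubfamily a) ∪ st (𝓕.nonMemberSubfamily a) :=
  fun S hS ↦ by
    obtain ⟨hS, ha⟩ := mem_nonMemberSubfamily.1 hS
    simpa only [mem_union, mem_st] using (mem_st.1 hS).memberSubfamily_or_nonMemberSubfamily ha

lemma memberSubfamily_st_subset :
    (st 𝓕).memberSubfamily a ⊆ st (𝓕.memberSubfamily a) ∩ st (𝓕.nonMemberSubfamily a) :=
  fun S hS ↦ by
    obtain ⟨hS, ha⟩ := mem_memberSubfamily.1 hS
    have h := mem_st.1 hS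
    have h₁ := h.memberSubfamily_erase (mem_insert_self a S)
    have h₀ := h.nonMemberSubfamily_erase (mem_insert_self a S)
    rw [erase_insert ha] at h₁ h₀
    exact mem_inter.2 ⟨mem_st.2 h₁, mem_st.2 h₀⟩

/-- Reverse Sauer inequality: every set system strongly shatters at most `|𝓕|` sets. -/
theorem reverse_sauer_inequality (n : ℕ) (𝓕 : Finset (Finset (Fin n))) :
    (st 𝓕).card ≤ 𝓕.card := by
  induction 𝓕 using memberFamily_induction_on with
  | empty => simpa using card_le_card (@st_subset_biUnion_powerset n ∅)
  | singleton_empty => simpa using card_le_card (@st_subset_biUnion_powerset n {∅})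
  | @subfamily a 𝓕 ih₀ ih₁ =>
    calc #(st 𝓕)
        = #((st 𝓕).memberSubfamily a) + #((st 𝓕).nonMemberSubfamily a) :=
          (card_memberSubfamily_add_card_nonMemberSubfamily a _).symm
      _ ≤ #(st (𝓕.memberSubfamily a) ∩ st (𝓕.nonMemberSubfamily a))
          + #(st (𝓕.memberSubfamily a) ∪ st (𝓕.nonMemberSubfamily a)) :=
          add_le_add (card_le_card memberSubfamily_st_subset)
            (card_le_card nonMemberSubfamily_st_subset)
      _ = #(st (𝓕.memberSubfamily a)) + #(st (𝓕.nonMemberSubfamily a)) := by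
          rw [add_comm, card_union_add_card_inter]
      _ ≤ #(𝓕.memberSubfamily a) + #(𝓕.nonMemberSubfamily a) := add_le_add ih₁ ih₀
      _ = #𝓕 := card_memberSubfamily_add_card_nonMemberSubfamily a 𝓕
end

section
/- For every set system F ⊆ 2^[n], equality holds in the Sauer inequality if and only if it holds in the reverse Sauer inequality: |Sh(F)| = |F| if and only if |st(F)| = |F|. -/
open scoped symmDiff

/-!
Split `𝒜` at an element `a` into its trace `ℬ = {t \ {a} | t ∈ 𝒜}` and the family
`𝒞 = {t ∌ a | t ∈ 𝒜, insert a t ∈ 𝒜}`, so that `|𝒜| = |ℬ| + |𝒞|`. Sets shattered by `ℬ`, and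
sets shattered by `𝒞` with `a` added, are shattered by `𝒜`; conversely every set strongly shattered
by `𝒜` arises in this way from sets strongly shattered by `ℬ` or `𝒞`. Induction on the ground set
gives Pajor's `|𝒜| ≤ |Sh 𝒜|` and the reverse `|st 𝒜| ≤ |𝒜|`. If either is an equality, so are
the inequalities for `ℬ` and `𝒞` and the inclusions above, which lets a set shattered by `𝒜` be
pushed down to `𝒞` (if it contains `a`) or `ℬ` (if it avoids `a`, with `a` in the ground set) and
shown to be strongly shattered there. Hence in both extremal cases `st 𝒜 = Sh 𝒜`.
-/

namespace Finset

variable {α : Type*} [DecidableEq α] {𝒜 ℬ 𝒞 : Finset (Finset α)} {s A : Finset α} {a : α}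

def StronglyShatters (𝒜 : Finset (Finset α)) (s : Finset α) : Prop :=
  ∃ u, Disjoint u s ∧ ∀ ⦃t⦄, t ⊆ s → t ∪ u ∈ 𝒜

lemma StronglyShatters.shatters (h : 𝒜.StronglyShatters s) : 𝒜.Shatters s := by
  obtain ⟨u, hus, hu⟩ := h
  intro t ht
  refine ⟨t ∪ u, hu ht, ?_⟩
  rw [inter_union_distrib_left, inter_eq_right.2 ht, disjoint_iff_inter_eq_empty.1 hus.symm,
    union_empty]

lemma stronglyShatters_empty : 𝒜.StronglyShatters ∅ ↔ 𝒜.Nonempty := by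
  refine ⟨fun h => h.shatters.nonempty, fun ⟨u, hu⟩ => ⟨u, disjoint_empty_right u, ?_⟩⟩
  intro t ht
  rwa [subset_empty.1 ht, empty_union]

lemma Shatters.stronglyShatters_of_forall_subset (hs : 𝒜.Shatters s) (h𝒜 : ∀ t ∈ 𝒜, t ⊆ s) :
    𝒜.StronglyShatters s := by
  refine ⟨∅, disjoint_empty_left s, fun t ht => ?_⟩
  obtain ⟨u, hu, rfl⟩ := hs ht
  rwa [union_empty, inter_eq_right.2 (h𝒜 u hu)]

open Classical in
noncomputable def strongShatterer (𝒜 : Finset (Finset α)) : Finset (Finset α) :=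
  𝒜.shatterer.filter 𝒜.StronglyShatters

@[simp] lemma mem_strongShatterer : s ∈ 𝒜.strongShatterer ↔ 𝒜.StronglyShatters s := by
  simp only [strongShatterer, mem_filter, mem_shatterer]
  exact and_iff_right_of_imp StronglyShatters.shatters

lemma strongShatterer_subset_shatterer : 𝒜.strongShatterer ⊆ 𝒜.shatterer :=
  fun _ hs => mem_shatterer.2 (mem_strongShatterer.1 hs).shatters

lemma strongShatterer_eq_shatterer (h : ∀ s, 𝒜.Shatters s → 𝒜.StronglyShatters s) :
    𝒜.strongShatterer = 𝒜.shatterer :=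
  strongShatterer_subset_shatterer.antisymm fun s hs =>
    mem_strongShatterer.2 (h s (mem_shatterer.1 hs))

lemma Shatters.notMem_of_forall_notMem (hs : 𝒜.Shatters s) (h𝒜 : ∀ t ∈ 𝒜, a ∉ t) : a ∉ s := by
  obtain ⟨t, ht, hst⟩ := hs.exists_superset
  exact notMem_mono hst (h𝒜 t ht)

lemma card_union_image_insert (hℬ : ∀ t ∈ ℬ, a ∉ t) (h𝒞 : ∀ t ∈ 𝒞, a ∉ t) :
    #(ℬ ∪ 𝒞.image (insert a)) = #ℬ + #𝒞 := by
  rw [card_union_of_disjoint, card_image_of_injOn]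
  · exact insert_erase_invOn.2.injOn.mono fun t ht => h𝒞 t ht
  · simp only [disjoint_right, mem_image]
    rintro _ ⟨t, -, rfl⟩ ht
    exact hℬ _ ht (mem_insert_self a t)

lemma card_union_image_insert_le (a : α) (ℬ 𝒞 : Finset (Finset α)) :
    #(ℬ ∪ 𝒞.image (insert a)) ≤ #ℬ + #𝒞 :=
  (card_union_le _ _).trans (Nat.add_le_add_left card_image_le _)

lemma card_image_erase_add_card_inter (a : α) (𝒜 : Finset (Finset α)) :
    #(𝒜.image (·.erase a)) + #(𝒜.memberSubfamily a ∩ 𝒜.nonMemberSubfamily a) = #𝒜 := by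
  rw [← memberSubfamily_union_nonMemberSubfamily, card_union_add_card_inter,
    card_memberSubfamily_add_card_nonMemberSubfamily]

lemma shatters_image_erase_iff (ha : a ∉ s) :
    (𝒜.image (·.erase a)).Shatters s ↔ 𝒜.Shatters s := by
  have hs : ∀ u : Finset α, s ∩ u.erase a = s ∩ u := fun u => by
    rw [inter_erase, erase_eq_of_notMem (notMem_mono inter_subset_left ha)]
  simp only [Shatters, exists_mem_image, hs]

lemma Shatters.insert_of_inter
    (hs : (𝒜.memberSubfamily a ∩ 𝒜.nonMemberSubfamily a).Shatters s) :
    𝒜.Shatters (insert a s) := by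
  intro t ht
  obtain ⟨u, hu, hsu⟩ := hs (subset_insert_iff.1 ht)
  simp only [mem_inter, mem_memberSubfamily, mem_nonMemberSubfamily] at hu
  by_cases hat : a ∈ t
  · exact ⟨insert a u, hu.1.1, by rw [← insert_inter_distrib, hsu, insert_erase hat]⟩
  · exact ⟨u, hu.2.1, by rw [insert_inter_of_notMem hu.2.2, hsu, erase_eq_of_notMem hat]⟩

lemma shatterer_union_image_insert_subset (a : α) (𝒜 : Finset (Finset α)) :
    (𝒜.image (·.erase a)).shatterer ∪
        (𝒜.memberSubfamily a ∩ 𝒜.nonMemberSubfamily a).shatterer.image (insert a) ⊆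
      𝒜.shatterer := by
  intro s hs
  simp only [mem_union, mem_image, mem_shatterer] at hs ⊢
  obtain hs | ⟨t, ht, rfl⟩ := hs
  · have ha : a ∉ s := hs.notMem_of_forall_notMem (by simp)
    exact (shatters_image_erase_iff ha).1 hs
  · exact ht.insert_of_inter

lemma StronglyShatters.image_erase (ha : a ∉ s) (hs : 𝒜.StronglyShatters s) :
    (𝒜.image (·.erase a)).StronglyShatters s := by
  obtain ⟨u, hus, hu⟩ := hs
  refine ⟨u.erase a, disjoint_of_subset_left (erase_subset a u) hus, fun t ht => ?_⟩
  rw [← erase_eq_of_notMem (notMem_mono ht ha), ← erase_union_distrib]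
  exact mem_image_of_mem _ (hu ht)

lemma StronglyShatters.erase_inter (ha : a ∈ s) (hs : 𝒜.StronglyShatters s) :
    (𝒜.memberSubfamily a ∩ 𝒜.nonMemberSubfamily a).StronglyShatters (s.erase a) := by
  obtain ⟨u, hus, hu⟩ := hs
  have hau : a ∉ u := disjoint_right.1 hus ha
  refine ⟨u, disjoint_of_subset_right (erase_subset a s) hus, fun t ht => ?_⟩
  have hat : a ∉ t := notMem_mono ht (notMem_erase a s)
  simp only [mem_inter, mem_memberSubfamily, mem_nonMemberSubfamily, mem_union, hat, hau,
    or_self, not_false_eq_true, and_true, ← insert_union]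
  exact ⟨hu (insert_subset ha (ht.trans (erase_subset a s))), hu (ht.trans (erase_subset a s))⟩

lemma StronglyShatters.insert_of_inter
    (hs : (𝒜.memberSubfamily a ∩ 𝒜.nonMemberSubfamily a).StronglyShatters s) :
    𝒜.StronglyShatters (insert a s) := by
  obtain ⟨u, hus, hu⟩ := hs
  have hu' : ∀ ⦃t⦄, t ⊆ s → insert a (t ∪ u) ∈ 𝒜 ∧ t ∪ u ∈ 𝒜 := fun t ht => by
    have := hu ht
    simp only [mem_inter, mem_memberSubfamily, mem_nonMemberSubfamily] at this
    exact ⟨this.1.1, this.2.1⟩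
  have hau : a ∉ u := by
    have := hu (empty_subset s)
    simp only [empty_union, mem_inter, mem_nonMemberSubfamily] at this
    exact this.2.2
  refine ⟨u, disjoint_insert_right.2 ⟨hau, hus⟩, fun t ht => ?_⟩
  by_cases hat : a ∈ t
  · simpa only [← insert_union, insert_erase hat] using (hu' (subset_insert_iff.1 ht)).1
  · simpa only [erase_eq_of_notMem hat] using (hu' (subset_insert_iff.1 ht)).2

lemma strongShatterer_subset_union_image_insert (a : α) (𝒜 : Finset (Finset α)) :
    𝒜.strongShatterer ⊆
      (𝒜.image (·.erase a)).strongShatterer ∪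
        (𝒜.memberSubfamily a ∩ 𝒜.nonMemberSubfamily a).strongShatterer.image (insert a) := by
  intro s hs
  rw [mem_strongShatterer] at hs
  simp only [mem_union, mem_image, mem_strongShatterer]
  by_cases ha : a ∈ s
  · exact Or.inr ⟨s.erase a, hs.erase_inter ha, insert_erase ha⟩
  · exact Or.inl (hs.image_erase ha)

lemma image_erase_subset_powerset_erase (h𝒜 : 𝒜 ⊆ A.powerset) :
    𝒜.image (·.erase a) ⊆ (A.erase a).powerset :=
  image_subset_iff.2 fun _ ht => mem_powerset.2 (erase_subset_erase a (mem_powerset.1 (h𝒜 ht)))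

lemma inter_subset_image_erase (a : α) (𝒜 : Finset (Finset α)) :
    𝒜.memberSubfamily a ∩ 𝒜.nonMemberSubfamily a ⊆ 𝒜.image (·.erase a) :=
  memberSubfamily_union_nonMemberSubfamily a 𝒜 ▸ inter_subset_union

lemma subset_powerset_sup (𝒜 : Finset (Finset α)) : 𝒜 ⊆ (𝒜.sup id).powerset :=
  fun _ ht => mem_powerset.2 (le_sup (f := id) ht)

theorem card_strongShatterer_le (𝒜 : Finset (Finset α)) : #𝒜.strongShatterer ≤ #𝒜 := by
  suffices ∀ A : Finset α, 𝒜 ⊆ A.powerset → #𝒜.strongShatterer ≤ #𝒜 from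
    this _ (subset_powerset_sup 𝒜)
  intro A
  induction A using Finset.strongInduction generalizing 𝒜 with | H A ih => ?_
  intro hA
  obtain rfl | ⟨a, ha⟩ := A.eq_empty_or_nonempty
  · refine card_le_card fun s hs => ?_
    obtain ⟨u, -, hu⟩ := mem_strongShatterer.1 hs
    have hsu := hu (subset_refl s)
    obtain ⟨rfl, rfl⟩ := union_eq_empty.1 (subset_empty.1 (mem_powerset.1 (hA hsu)))
    simpa using hsu
  have hℬ := image_erase_subset_powerset_erase (a := a) hA
  calc #𝒜.strongShatterer
      ≤ #(𝒜.image (·.erase a)).strongShatterer +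
          #(𝒜.memberSubfamily a ∩ 𝒜.nonMemberSubfamily a).strongShatterer :=
        (card_le_card (strongShatterer_subset_union_image_insert a 𝒜)).trans
          (card_union_image_insert_le _ _ _)
    _ ≤ #(𝒜.image (·.erase a)) + #(𝒜.memberSubfamily a ∩ 𝒜.nonMemberSubfamily a) :=
        add_le_add (ih _ (erase_ssubset ha) _ hℬ)
          (ih _ (erase_ssubset ha) _ ((inter_subset_image_erase a 𝒜).trans hℬ))
    _ = #𝒜 := card_image_erase_add_card_inter a 𝒜

lemma card_shatterer_union_image_insert (a : α) (𝒜 : Finset (Finset α)) :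
    #((𝒜.image (·.erase a)).shatterer ∪
        (𝒜.memberSubfamily a ∩ 𝒜.nonMemberSubfamily a).shatterer.image (insert a)) =
      #(𝒜.image (·.erase a)).shatterer +
        #(𝒜.memberSubfamily a ∩ 𝒜.nonMemberSubfamily a).shatterer := by
  refine card_union_image_insert (fun t ht => ?_) (fun t ht => ?_) <;>
    refine (mem_shatterer.1 ht).notMem_of_forall_notMem ?_
  · simp
  · simp [mem_nonMemberSubfamily]

theorem Shatters.stronglyShatters_of_card_shatterer_eq (h : #𝒜.shatterer = #𝒜)
    (hs : 𝒜.Shatters s) : 𝒜.StronglyShatters s := by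
  induction s using Finset.induction_on generalizing 𝒜 with
  | empty => exact stronglyShatters_empty.2 (shatters_empty.1 hs)
  | insert a s ha ih =>
    -- `|𝒜| = |ℬ| + |𝒞| ≤ |Sh ℬ| + |Sh 𝒞| = |U| ≤ |Sh 𝒜| = |𝒜|`, so every step is an equality.
    have hU := shatterer_union_image_insert_subset a 𝒜
    have hU_card := card_shatterer_union_image_insert a 𝒜
    have := card_le_card hU
    have := card_le_card_shatterer (𝒜.image (·.erase a))
    have := card_le_card_shatterer (𝒜.memberSubfamily a ∩ 𝒜.nonMemberSubfamily a)
    have := card_image_erase_add_card_inter a 𝒜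
    have h𝒞 : #(𝒜.memberSubfamily a ∩ 𝒜.nonMemberSubfamily a).shatterer =
        #(𝒜.memberSubfamily a ∩ 𝒜.nonMemberSubfamily a) := by omega
    have hU_eq := eq_of_subset_of_card_le hU (by omega)
    have hs' := mem_shatterer.2 hs
    rw [← hU_eq, mem_union, mem_image] at hs'
    obtain hs' | ⟨t, ht, hts⟩ := hs'
    · simpa using (mem_shatterer.1 hs').notMem_of_forall_notMem (a := a) (by simp)
    · have hat : a ∉ t := (mem_shatterer.1 ht).notMem_of_forall_notMem
        (by simp [mem_nonMemberSubfamily])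
      rw [← erase_insert hat, hts, erase_insert ha] at ht
      exact (ih h𝒞 (mem_shatterer.1 ht)).insert_of_inter

theorem Shatters.stronglyShatters_of_card_strongShatterer_eq (h : #𝒜.strongShatterer = #𝒜)
    (hs : 𝒜.Shatters s) : 𝒜.StronglyShatters s := by
  suffices ∀ A : Finset α, 𝒜 ⊆ A.powerset → 𝒜.StronglyShatters s from
    this _ (subset_powerset_sup 𝒜)
  intro A
  induction A using Finset.strongInduction generalizing 𝒜 with | H A ih => ?_
  intro hA
  obtain ⟨t, ht, hst⟩ := hs.exists_superset
  obtain rfl | hsA := (hst.trans (mem_powerset.1 (hA ht))).eq_or_ssubset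
  · exact hs.stronglyShatters_of_forall_subset fun _ hu => mem_powerset.1 (hA hu)
  obtain ⟨a, haA, has⟩ := exists_of_ssubset hsA
  -- `|𝒜| = |st 𝒜| ≤ |V| ≤ |st ℬ| + |st 𝒞| ≤ |ℬ| + |𝒞| = |𝒜|`, so every step is an equality.
  have hV := strongShatterer_subset_union_image_insert a 𝒜
  have := card_le_card hV
  have := card_union_image_insert_le a (𝒜.image (·.erase a)).strongShatterer
    (𝒜.memberSubfamily a ∩ 𝒜.nonMemberSubfamily a).strongShatterer
  have := card_strongShatterer_le (𝒜.image (·.erase a))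
  have := card_strongShatterer_le (𝒜.memberSubfamily a ∩ 𝒜.nonMemberSubfamily a)
  have := card_image_erase_add_card_inter a 𝒜
  have hV_eq := eq_of_subset_of_card_le hV (by omega)
  have hℬ : #(𝒜.image (·.erase a)).strongShatterer = #(𝒜.image (·.erase a)) := by omega
  have hs' := ih _ (erase_ssubset haA) hℬ ((shatters_image_erase_iff has).2 hs)
    (image_erase_subset_powerset_erase hA)
  rw [← mem_strongShatterer, hV_eq]
  exact mem_union_left _ (mem_strongShatterer.2 hs')

theorem card_shatterer_eq_iff_card_strongShatterer_eq :
    #𝒜.shatterer = #𝒜 ↔ #𝒜.strongShatterer = #𝒜 := by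
  constructor
  · intro h
    rwa [strongShatterer_eq_shatterer fun s hs => hs.stronglyShatters_of_card_shatterer_eq h]
  · intro h
    rwa [← strongShatterer_eq_shatterer fun s hs =>
      hs.stronglyShatters_of_card_strongShatterer_eq h]

end Finset

lemma shatters_iff_finset_shatters {n : ℕ} {𝓕 : Finset (Finset (Fin n))} {S : Finset (Fin n)} :
    Shatters 𝓕 S ↔ 𝓕.Shatters S := by
  simp only [Shatters, Finset.Shatters, Finset.inter_comm]

lemma stronglyShatters_iff_finset_stronglyShatters {n : ℕ} {𝓕 : Finset (Finset (Fin n))}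
    {S : Finset (Fin n)} : StronglyShatters 𝓕 S ↔ 𝓕.StronglyShatters S := by
  simp only [StronglyShatters, Finset.StronglyShatters, Finset.subset_compl_iff_disjoint_right]

lemma Sh_eq_shatterer {n : ℕ} (𝓕 : Finset (Finset (Fin n))) : Sh 𝓕 = 𝓕.shatterer := by
  ext S
  simp [Sh, shatters_iff_finset_shatters]

lemma st_eq_strongShatterer {n : ℕ} (𝓕 : Finset (Finset (Fin n))) :
    st 𝓕 = 𝓕.strongShatterer := by
  ext S
  simp [st, stronglyShatters_iff_finset_stronglyShatters]

/-- Equality in the Sauer inequality holds iff equality holds in the reverse Sauer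
inequality. -/
theorem sauer_extremal_iff_reverse_sauer_extremal (n : ℕ) (𝓕 : Finset (Finset (Fin n))) :
    (Sh 𝓕).card = 𝓕.card ↔ (st 𝓕).card = 𝓕.card := by
  rw [Sh_eq_shatterer, st_eq_strongShatterer]
  exact Finset.card_shatterer_eq_iff_card_strongShatterer_eq
end

section
/- If F ⊆ 2^[n] is shattering-extremal and i ∈ [n], then both parts F₀ = {F ∈ F : i ∉ F} and F₁ = {F \ {i} : F ∈ F, i ∈ F} of the standard subdivision of F with respect to i are shattering-extremal. -/
/-!
Counting the sets shattered by the two parts `𝓕₀ = {F ∈ 𝓕 : i ∉ F}` and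
`𝓕₁ = {F \ {i} : i ∈ F ∈ 𝓕}` of the standard subdivision: every set shattered by `𝓕₀` or `𝓕₁`
is shattered by `𝓕`, and if `S` is shattered by both then so is `S ∪ {i}`. Hence
`|Sh 𝓕₀| + |Sh 𝓕₁| = |Sh 𝓕₀ ∪ Sh 𝓕₁| + |Sh 𝓕₀ ∩ Sh 𝓕₁| ≤ |Sh 𝓕|`. If `𝓕` is extremal, then
combining this with Pajor's inequality `|𝓖| ≤ |Sh 𝓖|` for `𝓕₀` and `𝓕₁` gives
`|𝓕| = |𝓕₀| + |𝓕₁| ≤ |Sh 𝓕₀| + |Sh 𝓕₁| ≤ |Sh 𝓕| = |𝓕|`, which forces equality in both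
instances of Pajor's inequality.
-/

open scoped symmDiff

namespace Finset

variable {α : Type*} [DecidableEq α] {𝒜 : Finset (Finset α)} {s : Finset α} {a : α}

lemma notMem_of_shatters_of_forall_notMem (h : ∀ t ∈ 𝒜, a ∉ t) (hs : 𝒜.Shatters s) : a ∉ s :=
  fun ha ↦ by
    obtain ⟨t, ht, hst⟩ := hs.exists_superset
    exact h t ht (hst ha)

lemma shatterer_memberSubfamily_subset (a : α) (𝒜 : Finset (Finset α)) :
    (𝒜.memberSubfamily a).shatterer ⊆ 𝒜.shatterer := by
  intro s hs
  have hs := mem_shatterer.1 hs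
  have has : a ∉ s :=
    notMem_of_shatters_of_forall_notMem (fun t ht ↦ (mem_memberSubfamily.1 ht).2) hs
  refine mem_shatterer.2 fun t ht ↦ ?_
  obtain ⟨u, hu, rfl⟩ := hs ht
  exact ⟨insert a u, (mem_memberSubfamily.1 hu).1, inter_insert_of_notMem has⟩

lemma shatterer_nonMemberSubfamily_subset (a : α) (𝒜 : Finset (Finset α)) :
    (𝒜.nonMemberSubfamily a).shatterer ⊆ 𝒜.shatterer :=
  shatterer_mono (filter_subset _ _)

/-- Traces containing `a` come from the member subfamily, the others from the non-member one. -/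
lemma insert_mem_shatterer (h₁ : s ∈ (𝒜.memberSubfamily a).shatterer)
    (h₀ : s ∈ (𝒜.nonMemberSubfamily a).shatterer) : insert a s ∈ 𝒜.shatterer := by
  rw [mem_shatterer] at h₀ h₁ ⊢
  intro t ht
  rw [subset_insert_iff] at ht
  by_cases ha : a ∈ t
  · obtain ⟨u, hu, hsu⟩ := h₁ ht
    refine ⟨insert a u, (mem_memberSubfamily.1 hu).1, ?_⟩
    rw [← insert_inter_distrib, hsu, insert_erase ha]
  · obtain ⟨u, hu, hsu⟩ := h₀ ht
    refine ⟨u, (mem_nonMemberSubfamily.1 hu).1, ?_⟩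
    rwa [insert_inter_of_notMem (mem_nonMemberSubfamily.1 hu).2, hsu, erase_eq_self]

lemma card_shatterer_union_add_card_shatterer_inter_le (a : α) (𝒜 : Finset (Finset α)) :
    #((𝒜.memberSubfamily a).shatterer ∪ (𝒜.nonMemberSubfamily a).shatterer) +
      #((𝒜.memberSubfamily a).shatterer ∩ (𝒜.nonMemberSubfamily a).shatterer) ≤
      #𝒜.shatterer := by
  set 𝒮₁ := (𝒜.memberSubfamily a).shatterer
  set 𝒮₀ := (𝒜.nonMemberSubfamily a).shatterer
  have ha₁ : ∀ s ∈ 𝒮₁, a ∉ s := fun s hs ↦ notMem_of_shatters_of_forall_notMem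
    (fun t ht ↦ (mem_memberSubfamily.1 ht).2) (mem_shatterer.1 hs)
  have ha₀ : ∀ s ∈ 𝒮₀, a ∉ s := fun s hs ↦ notMem_of_shatters_of_forall_notMem
    (fun t ht ↦ (mem_nonMemberSubfamily.1 ht).2) (mem_shatterer.1 hs)
  have hinj : #((𝒮₁ ∩ 𝒮₀).image (insert a)) = #(𝒮₁ ∩ 𝒮₀) :=
    card_image_of_injOn <| insert_erase_invOn.2.injOn.mono fun s hs ↦ ha₁ s (mem_inter.1 hs).1
  have hdisj : Disjoint (𝒮₁ ∪ 𝒮₀) ((𝒮₁ ∩ 𝒮₀).image (insert a)) := by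
    simp only [disjoint_left, mem_union, mem_image, not_exists, not_and]
    rintro _ (hs | hs) s - rfl
    exacts [ha₁ _ hs (mem_insert_self a s), ha₀ _ hs (mem_insert_self a s)]
  calc #(𝒮₁ ∪ 𝒮₀) + #(𝒮₁ ∩ 𝒮₀)
      = #((𝒮₁ ∪ 𝒮₀) ∪ (𝒮₁ ∩ 𝒮₀).image (insert a)) := by
        rw [card_union_of_disjoint hdisj, hinj]
    _ ≤ #𝒜.shatterer := by
        refine card_le_card <| union_subset (union_subset
          (shatterer_memberSubfamily_subset a 𝒜) (shatterer_nonMemberSubfamily_subset a 𝒜)) ?_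
        exact forall_mem_image.2 fun s hs ↦
          insert_mem_shatterer (mem_inter.1 hs).1 (mem_inter.1 hs).2

theorem card_shatterer_subfamilies_eq (h : #𝒜.shatterer = #𝒜) (a : α) :
    #(𝒜.nonMemberSubfamily a).shatterer = #(𝒜.nonMemberSubfamily a) ∧
      #(𝒜.memberSubfamily a).shatterer = #(𝒜.memberSubfamily a) := by
  have hsplit := card_memberSubfamily_add_card_nonMemberSubfamily a 𝒜
  have hkey := card_shatterer_union_add_card_shatterer_inter_le a 𝒜
  rw [card_union_add_card_inter] at hkey
  have h₀ := card_le_card_shatterer (𝒜.nonMemberSubfamily a)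
  have h₁ := card_le_card_shatterer (𝒜.memberSubfamily a)
  omega

end Finset

/-- Both parts of the standard subdivision of a shattering-extremal family are
shattering-extremal. -/
theorem standard_subdivision_extremal (n : ℕ) (𝓕 : Finset (Finset (Fin n)))
    (h : Extremal 𝓕) (i : Fin n) :
    Extremal (𝓕.filter fun F => i ∉ F) ∧
      Extremal ((𝓕.filter fun F => i ∈ F).image fun F => F.erase i) := by
  unfold Extremal at h ⊢
  simp only [Sh_eq_shatterer] at h ⊢
  -- the two parts are `𝓕.nonMemberSubfamily i` and `𝓕.memberSubfamily i` up to unfolding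
  exact Finset.card_shatterer_subfamilies_eq h i
end

section
/- Let F ⊆ 2^[n] and S ⊆ [n]. If there exist two distinct sets I₁, I₂ ⊆ [n] \ S with {H ∪ I₁ : H ⊆ S} ⊆ F and {H ∪ I₂ : H ⊆ S} ⊆ F, then there exists an element α ∈ [n] \ S such that F shatters S ∪ {α}. -/
open scoped symmDiff

variable {α : Type*} [DecidableEq α]

namespace Finset

lemma union_inter_insert_of_mem {S H I : Finset α} {a : α} (hH : H ⊆ S) (hI : Disjoint I S)
    (ha : a ∈ I) : (H ∪ I) ∩ insert a S = insert a H := by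
  ext x
  have := hI.notMem_of_mem_left_finset (a := x)
  grind

lemma union_inter_insert_of_notMem {S H I : Finset α} {a : α} (hH : H ⊆ S) (hI : Disjoint I S)
    (ha : a ∉ I) : (H ∪ I) ∩ insert a S = H := by
  ext x
  have := hI.notMem_of_mem_left_finset (a := x)
  grind

end Finset

/-- Since both witnesses avoid `S`, the trace of `H ∪ Iᵢ` on `insert a S` is `H`, plus `a` exactly
when `a ∈ Iᵢ`; so `I₁` realises the traces containing `a` and `I₂` the others. -/
lemma shatters_insert_of_mem_of_notMem {n : ℕ} {𝓕 : Finset (Finset (Fin n))}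
    {S I₁ I₂ : Finset (Fin n)} {a : Fin n} (h₁ : I₁ ⊆ Sᶜ) (h₂ : I₂ ⊆ Sᶜ)
    (hI₁ : ∀ H ⊆ S, H ∪ I₁ ∈ 𝓕) (hI₂ : ∀ H ⊆ S, H ∪ I₂ ∈ 𝓕) (ha₁ : a ∈ I₁) (ha₂ : a ∉ I₂) :
    Shatters 𝓕 (insert a S) := by
  intro T hT
  by_cases haT : a ∈ T
  · have hH : T.erase a ⊆ S := Finset.subset_insert_iff.mp hT
    refine ⟨T.erase a ∪ I₁, hI₁ _ hH, ?_⟩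
    rw [Finset.union_inter_insert_of_mem hH (Finset.subset_compl_iff_disjoint_right.mp h₁) ha₁,
      Finset.insert_erase haT]
  · have hH : T ⊆ S := (Finset.subset_insert_iff_of_notMem haT).mp hT
    exact ⟨T ∪ I₂, hI₂ _ hH,
      Finset.union_inter_insert_of_notMem hH (Finset.subset_compl_iff_disjoint_right.mp h₂) ha₂⟩

/-- If `S` is strongly shattered with two distinct witnesses, then some proper
superset `S ∪ {α}` is shattered. -/
theorem shatters_insert_of_two_witnesses (n : ℕ) (𝓕 : Finset (Finset (Fin n)))
    (S I₁ I₂ : Finset (Fin n)) (h₁ : I₁ ⊆ Sᶜ) (h₂ : I₂ ⊆ Sᶜ) (hne : I₁ ≠ I₂)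
    (hI₁ : ∀ H ⊆ S, H ∪ I₁ ∈ 𝓕) (hI₂ : ∀ H ⊆ S, H ∪ I₂ ∈ 𝓕) :
    ∃ α : Fin n, α ∉ S ∧ Shatters 𝓕 (insert α S) := by
  obtain ⟨a, ha⟩ := Finset.symmDiff_nonempty.mpr hne
  rcases Finset.mem_symmDiff.mp ha with ⟨ha₁, ha₂⟩ | ⟨ha₂, ha₁⟩
  · exact ⟨a, Finset.mem_compl.mp (h₁ ha₁),
      shatters_insert_of_mem_of_notMem h₁ h₂ hI₁ hI₂ ha₁ ha₂⟩
  · exact ⟨a, Finset.mem_compl.mp (h₂ ha₂),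
      shatters_insert_of_mem_of_notMem h₂ h₁ hI₂ hI₁ ha₂ ha₁⟩
end

section
/- Let F ⊆ 2^[n] be shattering-extremal, let α ∈ [n] be an element not contained in any member of F (α ∉ supp(F)), and let W ∈ F. Then F ∪ {W ∪ {α}} is shattering-extremal, and its VC dimension is at most max(dim_VC(F), 1). -/
open scoped symmDiff

/-!
A fresh element `α` lies in no member of `𝓕`, so adding `W ∪ {α}` changes the shattered sets
in only one way. A set `S ∌ α` sees the new member through the trace `W ∩ S`, which `W ∈ 𝓕`
already provides; a set `S ∋ α` gets every trace containing `α` from the single new member, so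
it is shattered only if `S = {α}`, and `{α}` is indeed shattered (by `W` and `W ∪ {α}`). Hence
`Sh` gains exactly the one set `{α}`, just as the family gains one member.
-/

open Finset hiding Shatters

variable {n : ℕ} {𝓕 : Finset (Finset (Fin n))} {S G W : Finset (Fin n)} {α : Fin n}

theorem Shatters.mono_family {𝓖 : Finset (Finset (Fin n))} (h𝓕𝓖 : 𝓕 ⊆ 𝓖)
    (hS : Shatters 𝓕 S) : Shatters 𝓖 S := fun T hT ↦
  let ⟨F, hF, hFT⟩ := hS T hT
  ⟨F, h𝓕𝓖 hF, hFT⟩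

theorem shatters_insert_iff_of_trace_mem (hW : W ∈ 𝓕) (hWG : W ∩ S = G ∩ S) :
    Shatters (insert G 𝓕) S ↔ Shatters 𝓕 S := by
  refine ⟨fun hS T hT ↦ ?_, Shatters.mono_family (subset_insert G 𝓕)⟩
  obtain ⟨F, hF, hFT⟩ := hS T hT
  rcases mem_insert.1 hF with rfl | hF
  · exact ⟨W, hW, hWG.trans hFT⟩
  · exact ⟨F, hF, hFT⟩

theorem eq_singleton_of_shatters_insert (hα : ∀ F ∈ 𝓕, α ∉ F)
    (hS : Shatters (insert G 𝓕) S) (hαS : α ∈ S) : S = {α} := by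
  have trace_eq : ∀ T ⊆ S, α ∈ T → G ∩ S = T := by
    intro T hT hαT
    obtain ⟨F, hF, rfl⟩ := hS T hT
    rcases mem_insert.1 hF with rfl | hF
    · rfl
    · exact absurd (mem_inter.1 hαT).1 (hα F hF)
  calc S = G ∩ S := (trace_eq S subset_rfl hαS).symm
    _ = {α} := trace_eq {α} (singleton_subset_iff.2 hαS) (mem_singleton_self α)

theorem not_shatters_of_mem (hα : ∀ F ∈ 𝓕, α ∉ F) (hαS : α ∈ S) : ¬Shatters 𝓕 S := fun hS ↦
  let ⟨F, hF, hFS⟩ := hS S subset_rfl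
  hα F hF (mem_inter.1 (hFS.symm ▸ hαS : α ∈ F ∩ S)).1

theorem shatters_singleton_insert_union (hW : W ∈ 𝓕) (hαW : α ∉ W) :
    Shatters (insert (W ∪ {α}) 𝓕) {α} := by
  intro T hT
  rcases subset_singleton_iff.1 hT with rfl | rfl
  · exact ⟨W, mem_insert_of_mem hW, inter_singleton_of_notMem hαW⟩
  · exact ⟨W ∪ {α}, mem_insert_self _ _, by simp⟩

theorem sh_insert_union_singleton (hα : ∀ F ∈ 𝓕, α ∉ F) (hW : W ∈ 𝓕) :
    Sh (insert (W ∪ {α}) 𝓕) = insert {α} (Sh 𝓕) := by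
  ext S
  simp only [Sh, mem_filter, mem_univ, true_and, mem_insert]
  by_cases hαS : α ∈ S
  · refine ⟨fun hS ↦ .inl (eq_singleton_of_shatters_insert hα hS hαS), ?_⟩
    rintro (rfl | hS)
    · exact shatters_singleton_insert_union hW (hα W hW)
    · exact absurd hS (not_shatters_of_mem hα hαS)
  · have hWG : W ∩ S = (W ∪ {α}) ∩ S := by
      rw [union_inter_distrib_right, singleton_inter_of_notMem hαS, union_empty]
    rw [shatters_insert_iff_of_trace_mem hW hWG]
    exact ⟨.inr, fun h ↦ h.resolve_left (by rintro rfl; exact hαS (mem_singleton_self α))⟩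

/-- Step A: adding `W ∪ {α}` for `W ∈ 𝓕` and a new element `α ∉ supp 𝓕` keeps a
shattering-extremal family extremal, with VC dimension at most `max (dimVC 𝓕) 1`. -/
theorem stepA_extremal (n : ℕ) (𝓕 : Finset (Finset (Fin n))) (h : Extremal 𝓕)
    (α : Fin n) (hα : ∀ F ∈ 𝓕, α ∉ F) (W : Finset (Fin n)) (hW : W ∈ 𝓕) :
    Extremal (insert (W ∪ {α}) 𝓕) ∧
      dimVC (insert (W ∪ {α}) 𝓕) ≤ max (dimVC 𝓕) 1 := by
  have hSh := sh_insert_union_singleton hα hW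
  have hα_notMem_Sh : {α} ∉ Sh 𝓕 := by
    simpa [Sh] using not_shatters_of_mem hα (mem_singleton_self α)
  have hnew : W ∪ {α} ∉ 𝓕 := fun hG ↦ hα _ hG (by simp)
  constructor
  · rw [Extremal, hSh, card_insert_of_notMem hα_notMem_Sh, card_insert_of_notMem hnew, h]
  · rw [dimVC, hSh, sup_insert, card_singleton]
    exact sup_le (le_max_right _ _) (le_max_left _ _)
end
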